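/- Suppose {M_i^l}_{i=1}^{n_l} (l = 1,…,L) are LOCC measurements and H is a Hermitian operator such that H − η_cρ_c is block positive and Tr[M_c(H − η_cρ_c)] = 0 for all c ∈ N_n, where M_c = ⊗_l M_{c_l}^l. Then Π_l p_L(E^l) = p_L(⊗_l E^l) = p_SEP(⊗_l E^l). -/

import Mathlib

open Matrix BigOperators ComplexOrder

noncomputable section

/-- Tensor product of a family of local operators, one per party/step. -/
def tensorFam {m : ℕ} {ι : Fin m → Type*} [∀ k, Fintype (ι k)]
    (A : (k : Fin m) → Matrix (ι k) (ι k) ℂ) :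
    Matrix ((k : Fin m) → ι k) ((k : Fin m) → ι k) ℂ :=
  Matrix.of fun i j => ∏ k, A k (i k) (j k)

/-- Separable operator: a sum of tensor products of positive semidefinite local operators. -/
def IsSep {m : ℕ} {ι : Fin m → Type*} [∀ k, Fintype (ι k)]
    (E : Matrix ((k : Fin m) → ι k) ((k : Fin m) → ι k) ℂ) : Prop :=
  ∃ (S : Finset ℕ) (A : ℕ → (k : Fin m) → Matrix (ι k) (ι k) ℂ),
    (∀ s ∈ S, ∀ k, (A s k).PosSemidef) ∧ E = ∑ s ∈ S, tensorFam (A s)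

/-- Separable state: separable with trace one. -/
def IsSepState {m : ℕ} {ι : Fin m → Type*} [∀ k, Fintype (ι k)]
    (σ : Matrix ((k : Fin m) → ι k) ((k : Fin m) → ι k) ℂ) : Prop :=
  IsSep σ ∧ σ.trace = 1

/-- Block positive: nonnegative mean value on every separable state. -/
def IsBlockPos {m : ℕ} {ι : Fin m → Type*} [∀ k, Fintype (ι k)]
    (E : Matrix ((k : Fin m) → ι k) ((k : Fin m) → ι k) ℂ) : Prop :=
  ∀ σ, IsSepState σ → 0 ≤ ((E * σ).trace).re

def IsPOVM {α N : Type*} [Fintype α] [Fintype N] [DecidableEq N]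
    (M : α → Matrix N N ℂ) : Prop :=
  (∀ i, (M i).PosSemidef) ∧ ∑ i, M i = 1

/-- Average success probability of a guessing strategy. -/
def succProb {α N : Type*} [Fintype α] [Fintype N]
    (η : α → ℝ) (ρ M : α → Matrix N N ℂ) : ℝ :=
  ∑ i, η i * ((ρ i * M i).trace).re
/-- Tensor product over the sequence steps, with indices grouped by party:
party k holds its parts of all L systems. -/
def stepTensor {L m : ℕ} {ι : Fin L → Fin m → Type*} [∀ l k, Fintype (ι l k)]
    (A : (l : Fin L) → Matrix ((k : Fin m) → ι l k) ((k : Fin m) → ι l k) ℂ) :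
    Matrix ((k : Fin m) → (l : Fin L) → ι l k) ((k : Fin m) → (l : Fin L) → ι l k) ℂ :=
  Matrix.of fun i j => ∏ l, A l (fun k => i k l) (fun k => j k l)

/-!
Weak duality: for a separable measurement `N`, block positivity of `H - η_c ρ_c` paired with each
separable `N_c` gives `∑_c η_c Re Tr(ρ_c N_c) ≤ Re Tr H`, while complementary slackness and
`∑_c M_c = 1` make the product measurement `M_c = ⊗_l M^l_{c_l}` attain `Re Tr H`. Since LOCC
measurements are separable and contain `M_c`, both optima equal `Re Tr H`.

Success probabilities of product measurements factor, so `∏_l p(M^l) = Re Tr H` dominates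
`∏_l p(Q^l)` for all local LOCC measurements `Q^l`. All factors `p(M^l)` are positive (already a
constant guess succeeds with positive probability), so replacing one factor at a time shows that
each `M^l` is optimal for `E^l`.
-/

namespace Complex

lemma re_prod_of_nonneg {α : Type*} (s : Finset α) {f : α → ℂ} (hf : ∀ i ∈ s, 0 ≤ f i) :
    (∏ i ∈ s, f i).re = ∏ i ∈ s, (f i).re := by
  have hreal : ∏ i ∈ s, f i = ((∏ i ∈ s, (f i).re : ℝ) : ℂ) := by
    rw [ofReal_prod]
    exact Finset.prod_congr rfl fun i hi => (ext rfl (nonneg_iff.mp (hf i hi)).2.symm)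
  rw [hreal, ofReal_re]

end Complex

namespace Matrix

lemma PosSemidef.trace_mul_nonneg {n 𝕜 : Type*} [Fintype n] [RCLike 𝕜] {A B : Matrix n n 𝕜}
    (hA : A.PosSemidef) (hB : B.PosSemidef) : 0 ≤ (A * B).trace := by
  classical
  obtain ⟨C, rfl⟩ : ∃ C, B = star C * C := by
    open scoped MatrixOrder in exact CStarAlgebra.nonneg_iff_eq_star_mul_self.mp hB.nonneg
  rw [star_eq_conjTranspose, ← Matrix.mul_assoc, trace_mul_cycle]
  exact (hA.mul_mul_conjTranspose_same C).trace_nonneg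

end Matrix

section Tensor

variable {m : ℕ} {κ : Fin m → Type*} [∀ k, Fintype (κ k)]

lemma trace_tensorFam (A : (k : Fin m) → Matrix (κ k) (κ k) ℂ) :
    (tensorFam A).trace = ∏ k, (A k).trace := by
  simp only [trace, diag_apply, tensorFam, of_apply, Fintype.prod_sum]

lemma tensorFam_smul (c : Fin m → ℂ) (A : (k : Fin m) → Matrix (κ k) (κ k) ℂ) :
    tensorFam (fun k => c k • A k) = (∏ k, c k) • tensorFam A := by
  ext i j
  simp only [tensorFam, of_apply, Matrix.smul_apply, smul_eq_mul, Finset.prod_mul_distrib]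

lemma tensorFam_eq_zero {A : (k : Fin m) → Matrix (κ k) (κ k) ℂ} {k : Fin m} (hk : A k = 0) :
    tensorFam A = 0 := by
  ext i j
  exact Finset.prod_eq_zero (Finset.mem_univ k) (by simp [hk])

/-- Rescaling each factor to trace one turns a tensor product of nonzero positive semidefinite
operators into a separable state, and a zero factor makes the pairing vanish. -/
lemma IsBlockPos.re_trace_mul_tensorFam_nonneg
    {E : Matrix ((k : Fin m) → κ k) ((k : Fin m) → κ k) ℂ} (hE : IsBlockPos E)
    {A : (k : Fin m) → Matrix (κ k) (κ k) ℂ} (hA : ∀ k, (A k).PosSemidef) :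
    0 ≤ ((E * tensorFam A).trace).re := by
  by_cases hzero : ∃ k, (A k).trace = 0
  · obtain ⟨k, hk⟩ := hzero
    simp [tensorFam_eq_zero (((hA k).trace_eq_zero_iff).mp hk)]
  push Not at hzero
  set t : Fin m → ℝ := fun k => ((A k).trace).re
  have htr : ∀ k, (A k).trace = t k := fun k =>
    Complex.ext rfl (Complex.nonneg_iff.mp (hA k).trace_nonneg).2.symm
  have ht : ∀ k, 0 < t k := fun k =>
    (Complex.nonneg_iff.mp (hA k).trace_nonneg).1.lt_of_ne fun h =>
      hzero k (by rw [htr]; exact Complex.ofReal_eq_zero.mpr h.symm)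
  have hstate : IsSepState (tensorFam fun k => ((t k)⁻¹ : ℂ) • A k) := by
    refine ⟨⟨{0}, fun _ k => ((t k)⁻¹ : ℂ) • A k, fun _ _ k => ?_, by simp⟩, ?_⟩
    · exact (hA k).smul (by exact_mod_cast (inv_pos.mpr (ht k)).le)
    · rw [trace_tensorFam]
      refine Finset.prod_eq_one fun k _ => ?_
      rw [trace_smul, htr, smul_eq_mul, inv_mul_cancel₀ (by exact_mod_cast (ht k).ne')]
  have h := hE _ hstate
  rw [tensorFam_smul, Matrix.mul_smul, trace_smul, smul_eq_mul] at h
  simp only [← Complex.ofReal_inv, ← Complex.ofReal_prod, Complex.re_ofReal_mul] at h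
  exact (mul_nonneg_iff_of_pos_left (Finset.prod_pos fun k _ => inv_pos.mpr (ht k))).mp h

lemma IsBlockPos.re_trace_mul_nonneg_of_isSep
    {E N : Matrix ((k : Fin m) → κ k) ((k : Fin m) → κ k) ℂ}
    (hE : IsBlockPos E) (hN : IsSep N) : 0 ≤ ((E * N).trace).re := by
  obtain ⟨S, A, hA, rfl⟩ := hN
  rw [Matrix.mul_sum, trace_sum, Complex.re_sum]
  exact Finset.sum_nonneg fun s hs => hE.re_trace_mul_tensorFam_nonneg (hA s hs)

end Tensor

section Duality

variable {α X : Type*} [Fintype α] [Fintype X]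

lemma re_trace_sub_smul_mul (H ρ N : Matrix X X ℂ) (t : ℝ) :
    (((H - (t : ℂ) • ρ) * N).trace).re = ((H * N).trace).re - t * ((ρ * N).trace).re := by
  rw [Matrix.sub_mul, trace_sub, Matrix.smul_mul, trace_smul, smul_eq_mul, Complex.sub_re,
    Complex.re_ofReal_mul]

lemma succProb_nonneg {η : α → ℝ} {ρ N : α → Matrix X X ℂ} (hη : ∀ i, 0 ≤ η i)
    (hρ : ∀ i, (ρ i).PosSemidef) (hN : ∀ i, (N i).PosSemidef) : 0 ≤ succProb η ρ N :=
  Finset.sum_nonneg fun i _ =>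
    mul_nonneg (hη i) (Complex.nonneg_iff.mp ((hρ i).trace_mul_nonneg (hN i))).1

variable [DecidableEq X]

lemma sum_re_trace_mul_of_sum_eq_one (H : Matrix X X ℂ) {N : α → Matrix X X ℂ}
    (hN : ∑ c, N c = 1) : ∑ c, ((H * N c).trace).re = (H.trace).re := by
  rw [← Complex.re_sum, ← trace_sum, ← Matrix.mul_sum, hN, Matrix.mul_one]

lemma succProb_eq_re_trace_of_trace_mul_sub_eq_zero (η : α → ℝ) (ρ N : α → Matrix X X ℂ)
    (H : Matrix X X ℂ) (hslack : ∀ c, (N c * (H - (η c : ℂ) • ρ c)).trace = 0)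
    (hN : ∑ c, N c = 1) : succProb η ρ N = (H.trace).re := by
  rw [← sum_re_trace_mul_of_sum_eq_one H hN]
  refine Finset.sum_congr rfl fun c _ => ?_
  have h := congrArg Complex.re (hslack c)
  rw [trace_mul_comm, re_trace_sub_smul_mul, Complex.zero_re] at h
  linarith

lemma succProb_le_re_trace_of_isBlockPos {m : ℕ} {κ : Fin m → Type*} [∀ k, Fintype (κ k)]
    [∀ k, DecidableEq (κ k)] (η : α → ℝ)
    (ρ N : α → Matrix ((k : Fin m) → κ k) ((k : Fin m) → κ k) ℂ)
    (H : Matrix ((k : Fin m) → κ k) ((k : Fin m) → κ k) ℂ)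
    (hH : ∀ c, IsBlockPos (H - (η c : ℂ) • ρ c)) (hN : ∀ c, IsSep (N c))
    (hsum : ∑ c, N c = 1) :
    succProb η ρ N ≤ (H.trace).re := by
  rw [← sum_re_trace_mul_of_sum_eq_one H hsum]
  refine Finset.sum_le_sum fun c _ => ?_
  have h := (hH c).re_trace_mul_nonneg_of_isSep (hN c)
  rw [re_trace_sub_smul_mul] at h
  linarith

lemma succProb_guess [DecidableEq α] (η : α → ℝ) {ρ : α → Matrix X X ℂ}
    (hρ : ∀ i, (ρ i).trace = 1) (y : α) :
    succProb η ρ (fun i => if i = y then 1 else 0) = η y := by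
  rw [succProb, Finset.sum_eq_single y (fun i _ hi => by simp [hi]) (by simp)]
  simp [hρ y]

end Duality

section StepTensor

variable {L m : ℕ} {ι : Fin L → Fin m → Type*} [∀ l k, Fintype (ι l k)]

lemma sum_prod_stepIndex {R : Type*} [CommSemiring R]
    (F : (l : Fin L) → ((k : Fin m) → ι l k) → R) :
    ∑ x : (k : Fin m) → (l : Fin L) → ι l k, ∏ l, F l (fun k => x k l)
      = ∏ l, ∑ y : (k : Fin m) → ι l k, F l y := by
  rw [Fintype.prod_sum]
  exact Fintype.sum_equiv (Equiv.piComm fun k l => ι l k) _ _ fun _ => rfl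

lemma stepTensor_mul
    (A B : (l : Fin L) → Matrix ((k : Fin m) → ι l k) ((k : Fin m) → ι l k) ℂ) :
    stepTensor A * stepTensor B = stepTensor (fun l => A l * B l) := by
  ext i j
  simp only [stepTensor, mul_apply, of_apply, ← Finset.prod_mul_distrib]
  exact sum_prod_stepIndex fun l y => A l (fun k => i k l) y * B l y (fun k => j k l)

lemma trace_stepTensor
    (A : (l : Fin L) → Matrix ((k : Fin m) → ι l k) ((k : Fin m) → ι l k) ℂ) :
    (stepTensor A).trace = ∏ l, (A l).trace := by
  simp only [trace, diag_apply, stepTensor, of_apply]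
  exact sum_prod_stepIndex fun l y => A l y y

lemma stepTensor_one [∀ l k, DecidableEq (ι l k)] : stepTensor (ι := ι) (fun _ => 1) = 1 := by
  ext i j
  simp only [stepTensor, of_apply, one_apply, Fintype.prod_boole]
  congr 1
  simp only [funext_iff, eq_iff_iff]
  exact forall_comm

lemma sum_stepTensor {n : Fin L → ℕ}
    (M : (l : Fin L) → Fin (n l) → Matrix ((k : Fin m) → ι l k) ((k : Fin m) → ι l k) ℂ) :
    ∑ c : (l : Fin L) → Fin (n l), stepTensor (fun l => M l (c l))
      = stepTensor (fun l => ∑ i, M l i) := by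
  ext i j
  simp only [Matrix.sum_apply, stepTensor, of_apply, Fintype.prod_sum]

lemma succProb_stepTensor {n : Fin L → ℕ} (η : (l : Fin L) → Fin (n l) → ℝ)
    {ρ Q : (l : Fin L) → Fin (n l) → Matrix ((k : Fin m) → ι l k) ((k : Fin m) → ι l k) ℂ}
    (hρ : ∀ l i, (ρ l i).PosSemidef) (hQ : ∀ l i, (Q l i).PosSemidef) :
    succProb (fun c : (l : Fin L) → Fin (n l) => ∏ l, η l (c l))
      (fun c => stepTensor (fun l => ρ l (c l))) (fun c => stepTensor (fun l => Q l (c l)))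
      = ∏ l, succProb (η l) (ρ l) (Q l) := by
  simp only [succProb, stepTensor_mul, trace_stepTensor,
    Complex.re_prod_of_nonneg _ fun l _ => (hρ l _).trace_mul_nonneg (hQ l _),
    ← Finset.prod_mul_distrib, Fintype.prod_sum]

end StepTensor

lemma isGreatest_of_forall_prod_le {ι : Type*} [Fintype ι] [DecidableEq ι] {S : ι → Set ℝ}
    {s : ι → ℝ} (hs : ∀ i, s i ∈ S i) (hs0 : ∀ i, 0 ≤ s i) (hpos : ∀ i, ∃ y ∈ S i, 0 < y)
    (hle : ∀ x : ι → ℝ, (∀ i, x i ∈ S i) → ∏ i, x i ≤ ∏ i, s i) (i : ι) :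
    IsGreatest (S i) (s i) := by
  have hprod : 0 < ∏ j, s j := by
    choose y hyS hy using hpos
    exact (Finset.prod_pos fun j _ => hy j).trans_le (hle y hyS)
  have hrest : 0 < ∏ j ∈ {i}ᶜ, s j := Finset.prod_pos fun j _ =>
    (hs0 j).lt_of_ne (Finset.prod_ne_zero_iff.mp hprod.ne' j (Finset.mem_univ j)).symm
  refine ⟨hs i, fun y hy => ?_⟩
  have h := hle (Function.update s i y) fun j => by
    rcases eq_or_ne j i with rfl | hj
    · simpa using hy
    · simpa [hj] using hs j
  rw [Finset.prod_update_of_mem (Finset.mem_univ i), Fintype.prod_eq_mul_prod_compl i,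
    ← Finset.compl_eq_univ_sdiff] at h
  exact le_of_mul_le_mul_right h hrest

theorem factorizable_of_duality_certificate_general {L m : ℕ} {ι : Fin L → Fin m → Type*}
    [∀ l k, Fintype (ι l k)] [∀ l k, DecidableEq (ι l k)]
    {n : Fin L → ℕ}
    (η : (l : Fin L) → Fin (n l) → ℝ)
    (ρ : (l : Fin L) → Fin (n l) → Matrix ((k : Fin m) → ι l k) ((k : Fin m) → ι l k) ℂ)
    (hη : ∀ l i, 0 < η l i) (hsum : ∀ l, ∑ i, η l i = 1)
    (hρ : ∀ l i, (ρ l i).PosSemidef ∧ (ρ l i).trace = 1)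
    -- per-step LOCC measurement classes (separable POVMs containing trivial guesses)
    (C : (l : Fin L) → Set (Fin (n l) → Matrix ((k : Fin m) → ι l k) ((k : Fin m) → ι l k) ℂ))
    (hC : ∀ l, ∀ M ∈ C l, IsPOVM M ∧ ∀ i, IsSep (M i))
    (htriv : ∀ l, ∀ y : Fin (n l),
      (fun i => if i = y then (1 : Matrix ((k : Fin m) → ι l k) ((k : Fin m) → ι l k) ℂ) else 0) ∈ C l)
    -- LOCC measurement class on the sequence space
    (Cp : Set (((l : Fin L) → Fin (n l)) →
      Matrix ((k : Fin m) → (l : Fin L) → ι l k) ((k : Fin m) → (l : Fin L) → ι l k) ℂ))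
    (hCp : ∀ M ∈ Cp, IsPOVM M ∧ ∀ c, IsSep (ι := fun k => (l : Fin L) → ι l k) (M c))
    (hclosed : ∀ M : (l : Fin L) → Fin (n l) → Matrix ((k : Fin m) → ι l k) ((k : Fin m) → ι l k) ℂ,
      (∀ l, M l ∈ C l) → (fun c => stepTensor (fun l => M l (c l))) ∈ Cp)
    (pL : Fin L → ℝ) (hpL : ∀ l, IsLUB ((fun M => succProb (η l) (ρ l) M) '' C l) (pL l))
    (pLtot : ℝ)
    (hpLtot : IsLUB ((fun M => succProb (fun c : (l : Fin L) → Fin (n l) => ∏ l, η l (c l))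
      (fun c => stepTensor (fun l => ρ l (c l))) M) '' Cp) pLtot)
    (pSEPtot : ℝ)
    (hpSEPtot : IsLUB ((fun M => succProb (fun c : (l : Fin L) → Fin (n l) => ∏ l, η l (c l))
      (fun c => stepTensor (fun l => ρ l (c l))) M) ''
      {M | IsPOVM M ∧ ∀ c, IsSep (ι := fun k => (l : Fin L) → ι l k) (M c)}) pSEPtot)
    -- the duality certificate: LOCC measurements M^l and a Hermitian H
    (M : (l : Fin L) → Fin (n l) → Matrix ((k : Fin m) → ι l k) ((k : Fin m) → ι l k) ℂ)
    (hM : ∀ l, M l ∈ C l)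
    (H : Matrix ((k : Fin m) → (l : Fin L) → ι l k) ((k : Fin m) → (l : Fin L) → ι l k) ℂ)
    (hH1 : ∀ c : (l : Fin L) → Fin (n l),
      IsBlockPos (ι := fun k => (l : Fin L) → ι l k)
        (H - ((∏ l, η l (c l) : ℝ) : ℂ) • stepTensor (fun l => ρ l (c l))))
    (hH2 : ∀ c : (l : Fin L) → Fin (n l),
      ((stepTensor (fun l => M l (c l)) *
        (H - ((∏ l, η l (c l) : ℝ) : ℂ) • stepTensor (fun l => ρ l (c l)))).trace) = 0) :
    (∏ l, pL l) = pLtot ∧ pLtot = pSEPtot := by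
  have hρpsd : ∀ l i, (ρ l i).PosSemidef := fun l i => (hρ l i).1
  have hsep_le : ∀ N, IsPOVM N ∧ (∀ c, IsSep (ι := fun k => (l : Fin L) → ι l k) (N c)) →
      succProb (fun c : (l : Fin L) → Fin (n l) => ∏ l, η l (c l))
        (fun c => stepTensor (fun l => ρ l (c l))) N ≤ (H.trace).re := fun N hN =>
    succProb_le_re_trace_of_isBlockPos _ _ N H hH1 hN.2 hN.1.2
  have hM_eq : succProb (fun c : (l : Fin L) → Fin (n l) => ∏ l, η l (c l))
      (fun c => stepTensor (fun l => ρ l (c l))) (fun c => stepTensor (fun l => M l (c l)))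
      = (H.trace).re := by
    refine succProb_eq_re_trace_of_trace_mul_sub_eq_zero _ _ _ H hH2 ?_
    simp only [sum_stepTensor, fun l => (hC l _ (hM l)).1.2, stepTensor_one]
  have hM_prod : ∏ l, succProb (η l) (ρ l) (M l) = (H.trace).re := by
    rw [← hM_eq, succProb_stepTensor η hρpsd fun l => (hC l _ (hM l)).1.1]
  have hpLtot_eq : pLtot = (H.trace).re := hpLtot.unique <| IsGreatest.isLUB
    ⟨⟨_, hclosed M hM, hM_eq⟩, by rintro _ ⟨N, hN, rfl⟩; exact hsep_le N (hCp N hN)⟩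
  have hpSEPtot_eq : pSEPtot = (H.trace).re := hpSEPtot.unique <| IsGreatest.isLUB
    ⟨⟨_, hCp _ (hclosed M hM), hM_eq⟩, by rintro _ ⟨N, hN, rfl⟩; exact hsep_le N hN⟩
  have hlocal : ∀ l, IsGreatest ((fun M => succProb (η l) (ρ l) M) '' C l)
      (succProb (η l) (ρ l) (M l)) := by
    refine isGreatest_of_forall_prod_le (fun l => ⟨M l, hM l, rfl⟩)
      (fun l => succProb_nonneg (fun i => (hη l i).le) (hρpsd l) (hC l _ (hM l)).1.1)
      (fun l => ?_) (fun x hx => ?_)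
    · obtain ⟨y, -, -⟩ :=
        Finset.exists_ne_zero_of_sum_ne_zero (by simp [hsum l] : ∑ i, η l i ≠ 0)
      exact ⟨_, ⟨_, htriv l y, rfl⟩,
        (hη l y).trans_eq (succProb_guess (η l) (fun i => (hρ l i).2) y).symm⟩
    · choose Q hQ hQx using hx
      calc ∏ l, x l = ∏ l, succProb (η l) (ρ l) (Q l) := by simp only [hQx]
        _ = _ := (succProb_stepTensor η hρpsd fun l => (hC l _ (hQ l)).1.1).symm
        _ ≤ (H.trace).re := hsep_le _ (hCp _ (hclosed Q hQ))
        _ = ∏ l, succProb (η l) (ρ l) (M l) := hM_prod.symm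
  refine ⟨?_, hpLtot_eq.trans hpSEPtot_eq.symm⟩
  rw [hpLtot_eq, ← hM_prod]
  exact Finset.prod_congr rfl fun l _ => (hpL l).unique (hlocal l).isLUB

/-- if there are LOCC measurements {M_i^l} and a Hermitian H such that
H − η_cρ_c is block positive and Tr[M_c(H − η_cρ_c)] = 0 for all sequences c, then
Π_l p_L(E^l) = p_L(⊗E^l) = p_SEP(⊗E^l). -/
theorem factorizable_of_duality_certificate {L m : ℕ} {ι : Fin L → Fin m → Type*}
    [∀ l k, Fintype (ι l k)] [∀ l k, DecidableEq (ι l k)]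
    {n : Fin L → ℕ}
    (η : (l : Fin L) → Fin (n l) → ℝ)
    (ρ : (l : Fin L) → Fin (n l) → Matrix ((k : Fin m) → ι l k) ((k : Fin m) → ι l k) ℂ)
    (hη : ∀ l i, 0 < η l i) (hsum : ∀ l, ∑ i, η l i = 1)
    (hρ : ∀ l i, (ρ l i).PosSemidef ∧ (ρ l i).trace = 1)
    -- per-step LOCC measurement classes (separable POVMs containing trivial guesses)
    (C : (l : Fin L) → Set (Fin (n l) → Matrix ((k : Fin m) → ι l k) ((k : Fin m) → ι l k) ℂ))
    (hC : ∀ l, ∀ M ∈ C l, IsPOVM M ∧ ∀ i, IsSep (M i))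
    (htriv : ∀ l, ∀ y : Fin (n l),
      (fun i => if i = y then (1 : Matrix ((k : Fin m) → ι l k) ((k : Fin m) → ι l k) ℂ) else 0) ∈ C l)
    -- LOCC measurement class on the sequence space
    (Cp : Set (((l : Fin L) → Fin (n l)) →
      Matrix ((k : Fin m) → (l : Fin L) → ι l k) ((k : Fin m) → (l : Fin L) → ι l k) ℂ))
    (hCp : ∀ M ∈ Cp, IsPOVM M ∧ ∀ c, IsSep (ι := fun k => (l : Fin L) → ι l k) (M c))
    (hclosed : ∀ M : (l : Fin L) → Fin (n l) → Matrix ((k : Fin m) → ι l k) ((k : Fin m) → ι l k) ℂ,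
      (∀ l, M l ∈ C l) → (fun c => stepTensor (fun l => M l (c l))) ∈ Cp)
    (pL : Fin L → ℝ) (hpL : ∀ l, IsLUB ((fun M => succProb (η l) (ρ l) M) '' C l) (pL l))
    (pLtot : ℝ)
    (hpLtot : IsLUB ((fun M => succProb (fun c : (l : Fin L) → Fin (n l) => ∏ l, η l (c l))
      (fun c => stepTensor (fun l => ρ l (c l))) M) '' Cp) pLtot)
    (pSEPtot : ℝ)
    (hpSEPtot : IsLUB ((fun M => succProb (fun c : (l : Fin L) → Fin (n l) => ∏ l, η l (c l))
      (fun c => stepTensor (fun l => ρ l (c l))) M) ''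
      {M | IsPOVM M ∧ ∀ c, IsSep (ι := fun k => (l : Fin L) → ι l k) (M c)}) pSEPtot)
    -- the duality certificate: LOCC measurements M^l and a Hermitian H
    (M : (l : Fin L) → Fin (n l) → Matrix ((k : Fin m) → ι l k) ((k : Fin m) → ι l k) ℂ)
    (hM : ∀ l, M l ∈ C l)
    (H : Matrix ((k : Fin m) → (l : Fin L) → ι l k) ((k : Fin m) → (l : Fin L) → ι l k) ℂ)
    (hHerm : H.IsHermitian)
    (hH1 : ∀ c : (l : Fin L) → Fin (n l),
      IsBlockPos (ι := fun k => (l : Fin L) → ι l k)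
        (H - ((∏ l, η l (c l) : ℝ) : ℂ) • stepTensor (fun l => ρ l (c l))))
    (hH2 : ∀ c : (l : Fin L) → Fin (n l),
      ((stepTensor (fun l => M l (c l)) *
        (H - ((∏ l, η l (c l) : ℝ) : ℂ) • stepTensor (fun l => ρ l (c l)))).trace) = 0) :
    (∏ l, pL l) = pLtot ∧ pLtot = pSEPtot :=
  factorizable_of_duality_certificate_general η ρ hη hsum hρ C hC htriv Cp hCp hclosed pL hpL pLtot
    hpLtot pSEPtot hpSEPtot M hM H hH1 hH2
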